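/- Suppose Assumption (C) holds with parameter φ > 1, and let δ > 0, α ∈ [0,1). Set B := (1+λ)·φ·(b+D*)²/D* and Ω := 2b² + λ·B²·(D*)²/(2(b+D*)²). Then there exists R > 0 such that, with Q(z) := (1/2)z² + (Ω/(2D*δ))·∫_z^0 |g(s)−1|^{1−α}/(p(s)·g(s)) ds for z ≤ 0 and Q(z) := R·∫_0^z (e^s/g(s)²)(e^s−1) ds for z > 0, the function V(x1,x2,x3) := e^{x1} − x1 − 1 + (B/(b+D*))(e^{x2} − x2 − 1) + Q(x3) is positive definite and radially unbounded on ℝ³ and satisfies ∇V(x)·F(x) < 0 for all x ∈ ℝ³ \ {0}, where F is the closed-loop vector field F(x) = ((b+D*)g(x3)(e^{x2}−1) + b(g(x3)−1) + D*g(x3)(1−e^{x1}), (b+D*)(λ(1−g(x3)) + λ(e^{−x2}−1) + g(x3)(1−e^{x2})), p(x3)(D(x) − D*·g(x3)·e^{x1})). -/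

import Mathlib

/-!
Write `u = e^{x₁} - 1`, `v = e^{x₂} - 1` and `h = g(x₃)`. The contribution of the first two
coordinates to `∇V · F` is a quadratic form in `(u, v)` plus the nonpositive term
`λB v (e^{-x₂} - 1)`.

* For `x₃ < 0`, completing squares bounds this form by `Ω (h - 1)² / (2 D* h)`. Weighted by the
  integral term of `Q'`, the term `δ |g - 1|^{1+α}` of the feedback cancels exactly this amount,
  and the rest of the feedback contributes `x₃ D* h e^{x₁} (e^{-x₃} - 1) < 0`.
* At `x₃ = 0` we have `h = 1` and the form is negative definite because `(b + D*)² < 4 D* B`.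
* For `x₃ > 0`, write `h (1 + ψ) = 1`, so that `ψ = μ(S*)/μ(S) - 1` with `S = S_in / p(x₃)` in
  `[S*, S_in]`. Completing the square in `v` leaves `h (-A u² - β u ψ + C ψ²)` with the constants
  `β, C, A` of Assumption (C). The `Q`-term contributes `-R D* (1 + u) (e^{x₃} - 1)² / h`, and
  `|ψ| ≤ K (e^{x₃} - 1)` because `μ` is Lipschitz on `[S*, S_in]`; so for `R` large this term
  dominates unless `u` is close to `-1`, where Assumption (C) gives the sign.

Positivity and radial unboundedness hold term by term, `Q(z)` growing at least like `z²`.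
-/

open Real Set Filter Topology

lemma hasDerivAt_ite_le {G₁ G₂ G₁' G₂' : ℝ → ℝ} {a : ℝ}
    (h₁ : ∀ z, HasDerivAt G₁ (G₁' z) z) (h₂ : ∀ z, HasDerivAt G₂ (G₂' z) z)
    (ha : G₁ a = G₂ a) (ha' : G₁' a = G₂' a) (z : ℝ) :
    HasDerivAt (fun z => if z ≤ a then G₁ z else G₂ z) (if z ≤ a then G₁' z else G₂' z) z := by
  rcases lt_trichotomy z a with hz | rfl | hz
  · rw [if_pos hz.le]
    refine (h₁ z).congr_of_eventuallyEq ?_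
    filter_upwards [Iio_mem_nhds hz] with t ht using if_pos (le_of_lt ht)
  · rw [if_pos le_rfl]
    have hl : HasDerivWithinAt (fun t => if t ≤ z then G₁ t else G₂ t) (G₁' z) (Iic z) z :=
      (h₁ z).hasDerivWithinAt.congr (fun t ht => if_pos ht) (if_pos le_rfl)
    have hr : HasDerivWithinAt (fun t => if t ≤ z then G₁ t else G₂ t) (G₁' z) (Ici z) z := by
      rw [ha']
      refine (h₂ z).hasDerivWithinAt.congr (fun t ht => ?_) (by simp [ha])
      rcases (mem_Ici.1 ht).eq_or_lt with rfl | ht'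
      · simp [ha]
      · exact if_neg (not_le.2 ht')
    simpa [Iic_union_Ici, hasDerivWithinAt_univ] using hl.union hr
  · rw [if_neg (not_le.2 hz)]
    refine (h₂ z).congr_of_eventuallyEq ?_
    filter_upwards [Ioi_mem_nhds hz] with t ht using if_neg (not_le.2 ht)

def IsPosDefRadiallyUnbounded {E : Type*} [Zero E] [TopologicalSpace E] (f : E → ℝ) : Prop :=
  f 0 = 0 ∧ (∀ x, x ≠ 0 → 0 < f x) ∧ Tendsto f (cocompact E) atTop

namespace IsPosDefRadiallyUnbounded

variable {E F : Type*} [Zero E] [TopologicalSpace E] [Zero F] [TopologicalSpace F]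

lemma nonneg {f : E → ℝ} (hf : IsPosDefRadiallyUnbounded f) (x : E) : 0 ≤ f x := by
  by_cases hx : x = 0
  · rw [hx, hf.1]
  · exact (hf.2.1 x hx).le

lemma prod_add {f : E → ℝ} {g : F → ℝ} (hf : IsPosDefRadiallyUnbounded f)
    (hg : IsPosDefRadiallyUnbounded g) :
    IsPosDefRadiallyUnbounded (fun x : E × F => f x.1 + g x.2) := by
  refine ⟨by simp [hf.1, hg.1], fun x hx => ?_, ?_⟩
  · by_cases h₁ : x.1 = 0
    · have h₂ : x.2 ≠ 0 := fun h₂ => hx (Prod.ext h₁ h₂)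
      exact add_pos_of_nonneg_of_pos (hf.nonneg _) (hg.2.1 _ h₂)
    · exact add_pos_of_pos_of_nonneg (hf.2.1 _ h₁) (hg.nonneg _)
  · rw [← Filter.coprod_cocompact, Filter.coprod, tendsto_sup]
    exact ⟨(hf.2.2.comp tendsto_comap).atTop_add_nonneg fun x => hg.nonneg _,
      Tendsto.nonneg_add_atTop (fun x => hf.nonneg _) (hg.2.2.comp tendsto_comap)⟩

lemma const_mul {f : E → ℝ} (hf : IsPosDefRadiallyUnbounded f) {a : ℝ} (ha : 0 < a) :
    IsPosDefRadiallyUnbounded (fun x => a * f x) :=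
  ⟨by simp [hf.1], fun x hx => mul_pos ha (hf.2.1 x hx), hf.2.2.const_mul_atTop ha⟩

lemma of_mul_sq_le {E : Type*} [NormedAddCommGroup E] [ProperSpace E] {f : E → ℝ} {k : ℝ}
    (h0 : f 0 = 0) (hk : 0 < k) (hf : ∀ x, k * ‖x‖ ^ 2 ≤ f x) :
    IsPosDefRadiallyUnbounded f := by
  refine ⟨h0, fun x hx => (by positivity : 0 < k * ‖x‖ ^ 2).trans_le (hf x), ?_⟩
  exact tendsto_atTop_mono hf
    (((tendsto_pow_atTop two_ne_zero).comp tendsto_norm_cocompact_atTop).const_mul_atTop hk)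

end IsPosDefRadiallyUnbounded

lemma isPosDefRadiallyUnbounded_exp_sub_self_sub_one :
    IsPosDefRadiallyUnbounded (fun t : ℝ => exp t - t - 1) := by
  refine ⟨by simp, fun t ht => by linarith [add_one_lt_exp ht], ?_⟩
  refine tendsto_atTop_mono (fun t => ?_)
    (tendsto_atTop_add_const_right _ (-1) tendsto_norm_cocompact_atTop)
  rw [Real.norm_eq_abs]
  rcases le_total 0 t with ht | ht
  · nlinarith [quadratic_le_exp_of_nonneg ht, abs_of_nonneg ht]
  · linarith [exp_pos t, abs_of_nonpos ht]

noncomputable def lyapunovQ (c R : ℝ) (f₁ f₂ : ℝ → ℝ) (z : ℝ) : ℝ :=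
  if z ≤ 0 then (1/2) * z^2 + c * ∫ s in z..(0:ℝ), f₁ s else R * ∫ s in (0:ℝ)..z, f₂ s

section lyapunovQ

variable {c R : ℝ} {f₁ f₂ : ℝ → ℝ}

lemma lyapunovQ_zero : lyapunovQ c R f₁ f₂ 0 = 0 := by
  simp [lyapunovQ]

lemma hasDerivAt_lyapunovQ (hf₁ : Continuous f₁) (hf₂ : Continuous f₂) (hf₁0 : f₁ 0 = 0)
    (hf₂0 : f₂ 0 = 0) (z : ℝ) :
    HasDerivAt (lyapunovQ c R f₁ f₂) (if z ≤ 0 then z - c * f₁ z else R * f₂ z) z := by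
  have h₁ : ∀ t, HasDerivAt (fun t => (1/2) * t^2 + c * ∫ s in t..(0:ℝ), f₁ s)
      (t - c * f₁ t) t := fun t => by
    refine (((hasDerivAt_pow 2 t).const_mul (1/2 : ℝ)).add
      ((intervalIntegral.integral_hasDerivAt_left (b := 0) (hf₁.intervalIntegrable _ _)
        (hf₁.stronglyMeasurableAtFilter _ _) hf₁.continuousAt).const_mul c)).congr_deriv ?_
    push_cast; ring
  have h₂ : ∀ t, HasDerivAt (fun t => R * ∫ s in (0:ℝ)..t, f₂ s) (R * f₂ t) t := fun t =>
    (hf₂.integral_hasStrictDerivAt 0 t).hasDerivAt.const_mul R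
  exact hasDerivAt_ite_le h₁ h₂ (by simp) (by simp [hf₁0, hf₂0]) z

lemma mul_sq_le_lyapunovQ {m : ℝ} (hc : 0 ≤ c) (hR : 0 ≤ R) (hf₁ : ∀ s, 0 ≤ f₁ s)
    (hf₂ : Continuous f₂) (hm : ∀ s, 0 ≤ s → m * s ≤ f₂ s) (z : ℝ) :
    min (1/2) (R * m / 2) * z^2 ≤ lyapunovQ c R f₁ f₂ z := by
  unfold lyapunovQ
  split_ifs with hz
  · have : 0 ≤ ∫ s in z..(0:ℝ), f₁ s := intervalIntegral.integral_nonneg hz (fun s _ => hf₁ s)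
    nlinarith [min_le_left (1/2 : ℝ) (R * m / 2), sq_nonneg z, mul_nonneg hc this]
  · have hint : ∫ s in (0:ℝ)..z, m * s ≤ ∫ s in (0:ℝ)..z, f₂ s :=
      intervalIntegral.integral_mono_on (not_le.1 hz).le
        ((continuous_const.mul continuous_id).intervalIntegrable _ _) (hf₂.intervalIntegrable _ _)
        (fun s hs => hm s hs.1)
    rw [intervalIntegral.integral_const_mul, integral_id] at hint
    nlinarith [min_le_right (1/2 : ℝ) (R * m / 2), sq_nonneg z, mul_le_mul_of_nonneg_left hint hR]

end lyapunovQ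

lemma isPosDefRadiallyUnbounded_lyapunov {a c R m : ℝ} {f₁ f₂ : ℝ → ℝ} (ha : 0 < a)
    (hc : 0 ≤ c) (hR : 0 < R) (hm : 0 < m) (hf₁ : ∀ s, 0 ≤ f₁ s) (hf₂ : Continuous f₂)
    (hf₂m : ∀ s, 0 ≤ s → m * s ≤ f₂ s) :
    IsPosDefRadiallyUnbounded (fun x : ℝ × ℝ × ℝ =>
      exp x.1 - x.1 - 1 + a * (exp x.2.1 - x.2.1 - 1) + lyapunovQ c R f₁ f₂ x.2.2) := by
  have hQ : IsPosDefRadiallyUnbounded (lyapunovQ c R f₁ f₂) :=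
    .of_mul_sq_le lyapunovQ_zero (by positivity : 0 < min (1 / 2) (R * m / 2)) fun z => by
      rw [Real.norm_eq_abs, sq_abs]
      exact mul_sq_le_lyapunovQ hc hR.le hf₁ hf₂ hf₂m z
  simpa only [add_assoc] using isPosDefRadiallyUnbounded_exp_sub_self_sub_one.prod_add
    ((isPosDefRadiallyUnbounded_exp_sub_self_sub_one.const_mul ha).prod_add hQ)

lemma fderiv_separable_apply {V : ℝ × ℝ × ℝ → ℝ} {f₁ f₂ f₃ : ℝ → ℝ} {d₁ d₂ d₃ : ℝ}
    {x : ℝ × ℝ × ℝ} (hV : ∀ y, V y = f₁ y.1 + f₂ y.2.1 + f₃ y.2.2) (h₁ : HasDerivAt f₁ d₁ x.1)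
    (h₂ : HasDerivAt f₂ d₂ x.2.1) (h₃ : HasDerivAt f₃ d₃ x.2.2) (w : ℝ × ℝ × ℝ) :
    fderiv ℝ V x w = d₁ * w.1 + d₂ * w.2.1 + d₃ * w.2.2 := by
  rw [funext hV]
  have h : HasFDerivAt (fun y : ℝ × ℝ × ℝ => f₁ y.1 + f₂ y.2.1 + f₃ y.2.2) _ x :=
    ((h₁.comp_hasFDerivAt x hasFDerivAt_fst).add
      (h₂.comp_hasFDerivAt x (hasFDerivAt_snd (𝕜 := ℝ) (p := x)).fst)).add
      (h₃.comp_hasFDerivAt x (hasFDerivAt_snd (𝕜 := ℝ) (p := x)).snd)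
  rw [h.fderiv]
  simp

/-- The terms `(e^{x₁} - 1) F₁ + B/(b + D*) (e^{x₂} - 1) F₂` of `∇V · F`, with `h = g(x₃)`. -/
noncomputable def partialRate (b D B lam h x₁ x₂ : ℝ) : ℝ :=
  (exp x₁ - 1) * ((b + D) * h * (exp x₂ - 1) + b * (h - 1) + D * h * (1 - exp x₁)) +
    B / (b + D) * (exp x₂ - 1) *
      ((b + D) * (lam * (1 - h) + lam * (exp (-x₂) - 1) + h * (1 - exp x₂)))

lemma mul_exp_neg_sub_one_nonpos (x : ℝ) : (exp x - 1) * (exp (-x) - 1) ≤ 0 := by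
  rcases le_total 0 x with hx | hx
  · exact mul_nonpos_of_nonneg_of_nonpos (by linarith [one_le_exp hx])
      (by linarith [exp_le_one_iff.2 (neg_nonpos.2 hx)])
  · exact mul_nonpos_of_nonpos_of_nonneg (by linarith [exp_le_one_iff.2 hx])
      (by linarith [one_le_exp (neg_nonneg.2 hx)])

section partialRate

variable {b D B lam h x₁ x₂ : ℝ}

lemma partialRate_eq (hbD : b + D ≠ 0) :
    partialRate b D B lam h x₁ x₂ =
      (exp x₁ - 1) * ((b + D) * h * (exp x₂ - 1) + b * (h - 1) - D * h * (exp x₁ - 1)) -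
        B * lam * (h - 1) * (exp x₂ - 1) - B * h * (exp x₂ - 1) ^ 2 +
          B * lam * ((exp x₂ - 1) * (exp (-x₂) - 1)) := by
  unfold partialRate
  field_simp
  ring

lemma mul_partialRate_le {Ω : ℝ} (hbD : b + D ≠ 0) (hlam : 0 ≤ lam) (hD : 0 < D)
    (hDB : (b + D) ^ 2 ≤ D * B) (hΩ : b ^ 2 + D * B * lam ^ 2 ≤ Ω) (hh : 0 < h) :
    2 * D * h * partialRate b D B lam h x₁ x₂ ≤ Ω * (h - 1) ^ 2 := by
  set u := exp x₁ - 1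
  set v := exp x₂ - 1
  have hB : 0 ≤ B := nonneg_of_mul_nonneg_right ((sq_nonneg _).trans hDB) hD
  have hquad : 2 * D * h * (u * ((b + D) * h * v + b * (h - 1) - D * h * u) -
      B * lam * (h - 1) * v - B * h * v ^ 2) ≤ Ω * (h - 1) ^ 2 := by
    nlinarith [sq_nonneg (D * h * u - b * (h - 1)), sq_nonneg (D * h * u - (b + D) * h * v),
      mul_nonneg ((sq_nonneg _).trans hDB) (sq_nonneg (h * v + lam * (h - 1))),
      mul_nonneg (sub_nonneg.2 hDB) (sq_nonneg (h * v)),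
      mul_nonneg (sub_nonneg.2 hΩ) (sq_nonneg (h - 1))]
  have hvy : 2 * D * h * (B * lam * (v * (exp (-x₂) - 1))) ≤ 0 :=
    mul_nonpos_of_nonneg_of_nonpos (by positivity)
      (mul_nonpos_of_nonneg_of_nonpos (mul_nonneg hB hlam) (mul_exp_neg_sub_one_nonpos x₂))
  rw [partialRate_eq hbD]
  linarith

lemma partialRate_one_neg (hbD : b + D ≠ 0) (hlam : 0 ≤ lam) (hD : 0 < D)
    (hDB : (b + D) ^ 2 < 4 * (D * B)) (hx : (x₁, x₂) ≠ 0) :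
    partialRate b D B lam 1 x₁ x₂ < 0 := by
  set u := exp x₁ - 1
  set v := exp x₂ - 1
  have huv : u ≠ 0 ∨ v ≠ 0 := by
    simp only [u, v, ne_eq, sub_eq_zero, exp_eq_one_iff]
    contrapose! hx
    simp [hx]
  -- `4D` times the form is `(2Du - (b+D)v)² + (4DB - (b+D)²)v²`
  have hdef : 0 < D * u ^ 2 - (b + D) * u * v + B * v ^ 2 := by
    by_cases hv : v = 0
    · rw [hv]
      nlinarith [sq_pos_of_ne_zero (huv.resolve_right (not_not.2 hv))]
    · nlinarith [sq_nonneg (2 * D * u - (b + D) * v),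
        mul_pos (sub_pos.2 hDB) (sq_pos_of_ne_zero hv)]
  have hB : 0 ≤ B := by nlinarith [sq_nonneg (b + D)]
  have hvy := mul_nonpos_of_nonneg_of_nonpos (mul_nonneg hB hlam) (mul_exp_neg_sub_one_nonpos x₂)
  rw [partialRate_eq hbD]
  nlinarith

lemma partialRate_le_of_mul_one_add {Φ ψ : ℝ} (hbD : b + D ≠ 0) (hlam : 0 ≤ lam) (hB : 0 < B)
    (hΦ : 0 < Φ) (hDB : D * B = Φ * (b + D) ^ 2) (hh : 0 < h) (hψ : h * (1 + ψ) = 1) :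
    partialRate b D B lam h x₁ x₂ ≤
      h * (-(D - D / (4 * Φ)) * (exp x₁ - 1) ^ 2 - (b - lam * (b + D) / 2) * (exp x₁ - 1) * ψ +
        lam ^ 2 * B / 4 * ψ ^ 2) := by
  set u := exp x₁ - 1
  set v := exp x₂ - 1
  have hsq : (b + D) * u * v + B * lam * ψ * v - B * v ^ 2 ≤
      D / (4 * Φ) * u ^ 2 + (b + D) * lam / 2 * u * ψ + lam ^ 2 * B / 4 * ψ ^ 2 := by
    have hsplit : 4 * B * (D / (4 * Φ) * u ^ 2 + (b + D) * lam / 2 * u * ψ +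
        lam ^ 2 * B / 4 * ψ ^ 2 - ((b + D) * u * v + B * lam * ψ * v - B * v ^ 2)) =
        ((b + D) * u + B * lam * ψ - 2 * B * v) ^ 2 := by
      have : B * D / Φ = (b + D) ^ 2 := by field_simp; linarith
      linear_combination u ^ 2 * this
    nlinarith [sq_nonneg ((b + D) * u + B * lam * ψ - 2 * B * v)]
  have hvy := mul_nonpos_of_nonneg_of_nonpos (mul_nonneg hB.le hlam) (mul_exp_neg_sub_one_nonpos x₂)
  have hsub : h - 1 = -(h * ψ) := by linear_combination hψ
  rw [partialRate_eq hbD, hsub]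
  nlinarith [mul_le_mul_of_nonneg_left hsq hh.le]

end partialRate

lemma exists_forall_quadratic_nonpos {A β C : ℝ} (hA : 0 < A) (hC : 0 ≤ C) :
    ∃ c₀, ∀ c ≥ c₀, ∀ ψ, β * ψ + C * ψ ^ 2 < A → ∀ u, -1 < u →
      -A * u ^ 2 - β * u * ψ + (C - c * (1 + u)) * ψ ^ 2 ≤ 0 := by
  set q := β ^ 2 / A
  have hq : β ^ 2 = A * q := (mul_div_cancel₀ _ hA.ne').symm
  have hq0 : 0 ≤ q := by positivity
  refine ⟨5 * C + 20 * q + 1, fun c hc ψ hψ u hu => ?_⟩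
  rcases le_or_gt (-(4 / 5)) u with hu' | hu'
  · have hAM : -A * u ^ 2 - β * u * ψ ≤ q / 4 * ψ ^ 2 := by
      refine le_of_mul_le_mul_left ?_ (by positivity : 0 < 4 * A)
      nlinarith [sq_nonneg (2 * A * u + β * ψ)]
    have hcu : c / 5 * ψ ^ 2 ≤ c * (1 + u) * ψ ^ 2 :=
      mul_le_mul_of_nonneg_right (by nlinarith) (sq_nonneg ψ)
    nlinarith [sq_nonneg ψ]
  · -- with `r = -u` close to `1`, split as `r (β ψ + C ψ² - A) + (1 - r) (A r + (C - c) ψ²)`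
    have hsplit : -A * u ^ 2 - β * u * ψ + (C - c * (1 + u)) * ψ ^ 2 =
        -u * (β * ψ + C * ψ ^ 2 - A) + (1 + u) * (-A * u + (C - c) * ψ ^ 2) := by ring
    rw [hsplit]
    rcases le_or_gt A ((c - C) * ψ ^ 2) with hbig | hsmall
    · nlinarith [mul_neg_of_pos_of_neg (by linarith : 0 < -u)
          (by linarith : β * ψ + C * ψ ^ 2 - A < 0),
        mul_neg_of_pos_of_neg (by linarith : 0 < 1 + u)
          (by nlinarith : -A * u + (C - c) * ψ ^ 2 < 0)]
    · have h16 : 16 * q * ψ ^ 2 ≤ (c - C) * ψ ^ 2 :=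
        mul_le_mul_of_nonneg_right (by linarith) (sq_nonneg ψ)
      have hβψ : 4 * (β * ψ) < A := by
        have : (4 * (β * ψ)) ^ 2 < A ^ 2 := by nlinarith
        exact lt_of_abs_lt (abs_lt_of_sq_lt_sq this hA.le)
      have hCψ : 4 * (C * ψ ^ 2) < A := by
        nlinarith [mul_le_mul_of_nonneg_right (by linarith : 4 * C ≤ c - C) (sq_nonneg ψ)]
      have h1 : -u * (β * ψ + C * ψ ^ 2 - A) ≤ -u * (-(A / 2)) :=
        mul_le_mul_of_nonneg_left (by linarith) (by linarith)
      have h2 : (1 + u) * (-A * u + (C - c) * ψ ^ 2) ≤ (1 + u) * A :=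
        mul_le_mul_of_nonneg_left (by nlinarith [sq_nonneg ψ]) (by linarith)
      nlinarith

lemma feedback_mul_eq {κ D h P z x₁ e : ℝ} (hP : P = κ * exp (-z) + 1) (hP0 : P ≠ 0) :
    P * ((κ + 1) * D * h * exp (x₁ - z) / P + e - D * h * exp x₁) =
      D * h * exp x₁ * (exp (-z) - 1) + P * e := by
  rw [mul_sub, mul_add, mul_div_cancel₀ _ hP0, sub_eq_add_neg x₁, exp_add, hP]
  ring

lemma abs_rpow_one_sub_mul_abs_rpow_one_add (x α : ℝ) :
    |x| ^ (1 - α) * |x| ^ (1 + α) = x ^ 2 := by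
  rw [← rpow_add' (abs_nonneg x) (by ring_nf; norm_num), show 1 - α + (1 + α) = (2 : ℝ) by ring,
    rpow_two, sq_abs]

lemma partialRate_add_lt_zero_of_neg {b D B lam Ω δ h P z x₁ x₂ t₁ t₂ : ℝ} (hbD : b + D ≠ 0)
    (hlam : 0 ≤ lam) (hD : 0 < D) (hDB : (b + D) ^ 2 ≤ D * B) (hΩ : b ^ 2 + D * B * lam ^ 2 ≤ Ω)
    (hδ : 0 < δ) (hh : 0 < h) (hP : 0 < P) (hz : z < 0) (ht₁ : 0 ≤ t₁) (ht₂ : 0 ≤ t₂)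
    (ht : t₁ * t₂ = (h - 1) ^ 2) :
    partialRate b D B lam h x₁ x₂ +
      (z - Ω / (2 * D * δ) * (t₁ / (P * h))) * (D * h * exp x₁ * (exp (-z) - 1) + P * (δ * t₂))
      < 0 := by
  have hΩ0 : 0 ≤ Ω := by nlinarith [(sq_nonneg (b + D)).trans hDB, sq_nonneg lam]
  have hpr : partialRate b D B lam h x₁ x₂ ≤ Ω * (h - 1) ^ 2 / (2 * D * h) := by
    rw [le_div_iff₀ (by positivity), mul_comm]
    exact mul_partialRate_le hbD hlam hD hDB hΩ hh
  have ha : 0 < D * h * exp x₁ * (exp (-z) - 1) := by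
    have := one_lt_exp_iff.2 (neg_pos.2 hz)
    have := sub_pos.2 this
    positivity
  -- the `δ`-term of the feedback exactly cancels the worst case of `partialRate`
  have hcancel :
      Ω / (2 * D * δ) * (t₁ / (P * h)) * (P * (δ * t₂)) = Ω * (h - 1) ^ 2 / (2 * D * h) := by
    rw [← ht]; field_simp
  have hw : 0 ≤ Ω / (2 * D * δ) * (t₁ / (P * h)) := by positivity
  nlinarith [mul_neg_of_neg_of_pos hz ha, mul_nonpos_of_nonpos_of_nonneg hz.le
    (by positivity : 0 ≤ P * (δ * t₂)), mul_nonneg hw ha.le]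

lemma partialRate_add_lt_zero_of_pos {b D B lam Φ R M K h ψ z x₁ x₂ : ℝ} (hbD : b + D ≠ 0)
    (hlam : 0 ≤ lam) (hD : 0 < D) (hB : 0 < B) (hΦ : 0 < Φ) (hDB : D * B = Φ * (b + D) ^ 2)
    (hR : 0 < R) (hK : 0 < K) (hh : 0 < h) (hhM : h ≤ M) (hz : 0 < z) (hhψ : h * (1 + ψ) = 1)
    (hψ : |ψ| ≤ K * (exp z - 1))
    (hbr : -(D - D / (4 * Φ)) * (exp x₁ - 1) ^ 2 - (b - lam * (b + D) / 2) * (exp x₁ - 1) * ψ +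
      (lam ^ 2 * B / 4 - R * D / (2 * K ^ 2 * M ^ 2) * (1 + (exp x₁ - 1))) * ψ ^ 2 ≤ 0) :
    partialRate b D B lam h x₁ x₂ +
      R * (exp z / h ^ 2 * (exp z - 1)) * (D * h * exp x₁ * (exp (-z) - 1)) < 0 := by
  have hpr := partialRate_le_of_mul_one_add (x₁ := x₁) (x₂ := x₂) hbD hlam hB hΦ hDB hh hhψ
  set u := exp x₁ - 1
  set E := exp z - 1
  have hu : 1 + u = exp x₁ := by ring
  have hE : 0 < E := sub_pos.2 (one_lt_exp_iff.2 hz)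
  have hM : 0 < M := hh.trans_le hhM
  have hQF : R * (exp z / h ^ 2 * E) * (D * h * exp x₁ * (exp (-z) - 1)) =
      -(R * D * (1 + u) * E ^ 2 / h) := by
    rw [hu, exp_neg]
    field_simp
    ring
  set c := R * D / (2 * K ^ 2 * M ^ 2)
  set ρ := R * D / M ^ 2 * E ^ 2
  have hρ : 0 < ρ := by positivity
  have hψE : c * ψ ^ 2 ≤ ρ / 2 := by
    have : ψ ^ 2 ≤ K ^ 2 * E ^ 2 := by
      rw [← mul_pow, ← sq_abs]; exact pow_le_pow_left₀ (abs_nonneg ψ) hψ 2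
    calc c * ψ ^ 2 ≤ c * (K ^ 2 * E ^ 2) := by gcongr
      _ = ρ / 2 := by simp only [c, ρ]; field_simp
  have hhE : h * ρ ≤ R * D * E ^ 2 / h := by
    rw [le_div_iff₀ hh]
    calc h * ρ * h = R * D * E ^ 2 * (h ^ 2 / M ^ 2) := by simp only [ρ]; ring
      _ ≤ R * D * E ^ 2 * 1 := by
        gcongr; exact div_le_one_of_le₀ (pow_le_pow_left₀ hh.le hhM 2) (sq_nonneg M)
      _ = R * D * E ^ 2 := mul_one _
  have hu0 : 0 < 1 + u := hu ▸ exp_pos x₁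
  have hw : R * D * (1 + u) * E ^ 2 / h = (1 + u) * (R * D * E ^ 2 / h) := by ring
  rw [hQF, hw]
  nlinarith [mul_nonpos_of_nonneg_of_nonpos hh.le hbr, mul_le_mul_of_nonneg_left hψE
    (mul_pos hh hu0).le, mul_le_mul_of_nonneg_left hhE hu0.le, mul_pos (mul_pos hh hu0) hρ]

lemma exists_abs_div_sub_one_le {f : ℝ → ℝ} {a b : ℝ} (hab : a ≤ b)
    (hf : ContDiffOn ℝ 1 f (Icc a b)) (hpos : ∀ x ∈ Icc a b, 0 < f x) :
    ∃ K > 0, ∀ x ∈ Icc a b, |f a / f x - 1| ≤ K * (x - a) := by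
  obtain ⟨L, hL⟩ := hf.exists_lipschitzOnWith one_ne_zero (convex_Icc a b) isCompact_Icc
  obtain ⟨xm, hxm, hmin⟩ :=
    isCompact_Icc.exists_isMinOn (nonempty_Icc.2 hab) hf.continuousOn
  have hm := hpos xm hxm
  refine ⟨L / f xm + 1, by positivity, fun x hx => ?_⟩
  have hfx := hpos x hx
  have hlip : |f a - f x| ≤ L * (x - a) := by
    have := hL.dist_le_mul a (left_mem_Icc.2 hab) x hx
    rwa [Real.dist_eq, Real.dist_eq, abs_sub_comm a, abs_of_nonneg (sub_nonneg.2 hx.1)] at this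
  rw [div_sub_one hfx.ne', abs_div, abs_of_pos hfx]
  calc |f a - f x| / f x ≤ L * (x - a) / f xm :=
        div_le_div₀ (by have := hx.1; positivity) hlip hm (hmin hx)
    _ ≤ (L / f xm + 1) * (x - a) := by
        rw [mul_div_right_comm, add_mul, one_mul]
        exact le_add_of_nonneg_right (sub_nonneg.2 hx.1)

section Substrate

variable {Sin Ss κ z : ℝ}

lemma substrate_mem_Icc (hSs : 0 < Ss) (hlt : Ss < Sin) (hκ : κ = (Sin - Ss) / Ss)
    (hz : 0 ≤ z) : Sin / (κ * exp (-z) + 1) ∈ Icc Ss Sin := by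
  have hκ0 : 0 < κ := hκ ▸ div_pos (sub_pos.2 hlt) hSs
  have he : exp (-z) ≤ 1 := exp_le_one_iff.2 (neg_nonpos.2 hz)
  have hSin : Sin = Ss * (κ + 1) := by rw [hκ]; field_simp; ring
  constructor
  · rw [le_div_iff₀ (by positivity), hSin]
    nlinarith
  · exact div_le_self (hSs.trans hlt).le (by nlinarith [exp_pos (-z)])

lemma substrate_sub_le (hSs : 0 < Ss) (hlt : Ss < Sin) (hκ : κ = (Sin - Ss) / Ss)
    (hz : 0 ≤ z) : Sin / (κ * exp (-z) + 1) - Ss ≤ (Sin - Ss) * (exp z - 1) := by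
  have hκ0 : 0 < κ := hκ ▸ div_pos (sub_pos.2 hlt) hSs
  have hSin : Sin = Ss * (κ + 1) := by rw [hκ]; field_simp; ring
  have he := exp_pos (-z)
  have h1 : 1 - exp (-z) ≤ exp z - 1 := by
    linarith [add_one_le_exp (-z), add_one_le_exp z]
  have h2 : Sin / (κ * exp (-z) + 1) - Ss = Ss * κ * (1 - exp (-z)) / (κ * exp (-z) + 1) := by
    rw [hSin]; field_simp; ring
  rw [h2, div_le_iff₀ (by positivity), hSin]
  have h3 : 0 ≤ 1 - exp (-z) := by linarith [exp_le_one_iff.2 (neg_nonpos.2 hz)]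
  nlinarith [mul_nonneg (mul_nonneg hSs.le hκ0.le) h3, mul_nonneg (mul_nonneg hSs.le hκ0.le)
    (mul_nonneg (sub_nonneg.2 h1) (mul_nonneg hκ0.le he.le)), mul_nonneg hκ0.le he.le]

end Substrate

section Gain

variable {S_in Sstar κ : ℝ} {μ p g : ℝ → ℝ}

lemma pos_continuous_of_chemostat (hSstar : Sstar ∈ Ioo 0 S_in)
    (hμ_C1 : ContDiffOn ℝ 1 μ (Ici 0)) (hμ_pos : ∀ S, 0 < S → 0 < μ S)
    (hκ : κ = (S_in - Sstar) / Sstar) (hp : ∀ z, p z = κ * exp (-z) + 1)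
    (hg : ∀ z, g z = μ (S_in / p z) / μ Sstar) :
    (∀ z, 0 < p z) ∧ Continuous p ∧ (∀ z, 0 < g z) ∧ Continuous g ∧ g 0 = 1 := by
  obtain ⟨hS0, hSlt⟩ := hSstar
  have hμs := hμ_pos _ hS0
  have hκ0 : 0 < κ := hκ ▸ div_pos (sub_pos.2 hSlt) hS0
  have hp_pos : ∀ z, 0 < p z := fun z => by rw [hp]; positivity
  have hp_cont : Continuous p := by rw [funext hp]; fun_prop
  have hS_pos : ∀ z, 0 < S_in / p z := fun z => div_pos (hS0.trans hSlt) (hp_pos z)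
  refine ⟨hp_pos, hp_cont, fun z => hg z ▸ div_pos (hμ_pos _ (hS_pos z)) hμs, ?_, ?_⟩
  · rw [funext hg]
    exact (continuousOn_univ.1 (hμ_C1.continuousOn.comp
      (continuous_const.div hp_cont fun z => (hp_pos z).ne').continuousOn
      fun z _ => (hS_pos z).le)).div_const _
  · rw [hg, hp, neg_zero, exp_zero, mul_one, hκ, div_add_one hS0.ne', sub_add_cancel,
      div_div_cancel₀ (hS0.trans hSlt).ne', div_self hμs.ne']

lemma exists_gain_le (hμ_bdd : BddAbove (range μ)) (hμs : 0 < μ Sstar)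
    (hg : ∀ z, g z = μ (S_in / p z) / μ Sstar) : ∃ M, ∀ z, g z ≤ M := by
  obtain ⟨M, hM⟩ := hμ_bdd
  exact ⟨M / μ Sstar, fun z => hg z ▸ div_le_div_of_nonneg_right (hM (mem_range_self _)) hμs.le⟩

lemma exists_abs_gain_inv_sub_one_le (hSstar : Sstar ∈ Ioo 0 S_in)
    (hμ_C1 : ContDiffOn ℝ 1 μ (Ici 0)) (hμ_pos : ∀ S, 0 < S → 0 < μ S)
    (hκ : κ = (S_in - Sstar) / Sstar) (hp : ∀ z, p z = κ * exp (-z) + 1)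
    (hg : ∀ z, g z = μ (S_in / p z) / μ Sstar) :
    ∃ K > 0, ∀ z, 0 < z → ∃ S ∈ Icc Sstar S_in,
      g z * (μ Sstar / μ S) = 1 ∧ |μ Sstar / μ S - 1| ≤ K * (exp z - 1) := by
  obtain ⟨hS0, hSlt⟩ := hSstar
  obtain ⟨K, hK, hψK⟩ := exists_abs_div_sub_one_le hSlt.le
    (hμ_C1.mono fun S hS => hS0.le.trans hS.1) fun S hS => hμ_pos S (hS0.trans_le hS.1)
  refine ⟨K * (S_in - Sstar), mul_pos hK (sub_pos.2 hSlt), fun z hz => ?_⟩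
  have hS := substrate_mem_Icc hS0 hSlt hκ hz.le
  rw [← hp] at hS
  refine ⟨_, hS, ?_, (hψK _ hS).trans ?_⟩
  · have := hμ_pos _ hS0
    have := hμ_pos _ (hS0.trans_le hS.1)
    rw [hg]
    field_simp
  · rw [mul_assoc, hp]
    exact mul_le_mul_of_nonneg_left (substrate_sub_le hS0 hSlt hκ hz.le) hK.le

end Gain

lemma continuous_abs_sub_one_rpow_div {α : ℝ} {p g : ℝ → ℝ} (hα : α < 1) (hp : Continuous p)
    (hg : Continuous g) (hpg : ∀ s, p s * g s ≠ 0) :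
    Continuous fun s => |g s - 1| ^ (1 - α) / (p s * g s) :=
  (((hg.sub continuous_const).abs.rpow_const fun _ => Or.inr (by linarith)).div (hp.mul hg)) hpg

lemma continuous_exp_div_sq_mul_exp_sub_one {g : ℝ → ℝ} (hg : Continuous g)
    (hg0 : ∀ s, g s ≠ 0) : Continuous fun s => exp s / g s ^ 2 * (exp s - 1) :=
  (continuous_exp.div (hg.pow 2) fun s => pow_ne_zero 2 (hg0 s)).mul
    (continuous_exp.sub continuous_const)

lemma one_div_sq_mul_le_exp_div_sq_mul {y M s : ℝ} (hy : 0 < y) (hyM : y ≤ M) (hs : 0 ≤ s) :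
    1 / M ^ 2 * s ≤ exp s / y ^ 2 * (exp s - 1) := by
  have : 1 / M ^ 2 ≤ exp s / y ^ 2 :=
    div_le_div₀ (exp_pos s).le (one_le_exp hs) (by positivity) (pow_le_pow_left₀ hy.le hyM 2)
  exact mul_le_mul this (by linarith [add_one_le_exp s]) hs (by positivity)

lemma sq_add_mul_mul_sq_le {b D B lam Φ : ℝ} (hlam : 0 ≤ lam) (hΦ : 2 * lam ≤ Φ)
    (hbD : 0 < b + D) (hDB : D * B = Φ * (b + D) ^ 2) :
    b ^ 2 + D * B * lam ^ 2 ≤ 2 * b ^ 2 + lam * B ^ 2 * D ^ 2 / (2 * (b + D) ^ 2) := by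
  have : lam * B ^ 2 * D ^ 2 / (2 * (b + D) ^ 2) = lam * Φ ^ 2 * (b + D) ^ 2 / 2 := by
    rw [show lam * B ^ 2 * D ^ 2 = lam * (D * B) ^ 2 by ring, hDB]
    field_simp
  rw [this, hDB]
  nlinarith [mul_nonneg (mul_nonneg hlam (sub_nonneg.2 hΦ)) (mul_nonneg (by linarith : 0 ≤ Φ)
    (sq_nonneg (b + D))), sq_nonneg b]

theorem stmt_18_general
    (S_in Sstar b Dstar : ℝ) (μ : ℝ → ℝ)
    (hSstar : Sstar ∈ Set.Ioo 0 S_in)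
    (hb : 0 ≤ b) (hDstar : 0 < Dstar)
    (hμ_bdd : BddAbove (Set.range μ))
    (hμ_C1 : ContDiffOn ℝ 1 μ (Set.Ici 0))
    (hμ_pos : ∀ S, 0 < S → 0 < μ S)
    (lam : ℝ)
    (hlam01 : lam ∈ Set.Ico (0 : ℝ) 1)
    (κ : ℝ) (hκ : κ = (S_in - Sstar) / Sstar)
    (p g : ℝ → ℝ)
    (hp : ∀ z, p z = κ * Real.exp (-z) + 1)
    (hg : ∀ z, g z = μ (S_in / p z) / μ Sstar)
    -- Assumption (C) with parameter φ
    (φ : ℝ) (hφ : 1 < φ)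
    (hC : ∀ S ∈ Set.Icc Sstar S_in,
      (b - lam * (b + Dstar) / 2) * (μ Sstar / μ S - 1) +
        (1 + lam) * (lam^2 * φ * (b + Dstar)^2 / (4 * Dstar)) *
          (μ Sstar / μ S - 1)^2 <
      Dstar * (1 - 1 / (4 * (1 + lam) * φ)))
    (δ α : ℝ) (hδ : 0 < δ) (hα : α ∈ Set.Ico (0 : ℝ) 1)
    (B Ω : ℝ)
    (hB : B = (1 + lam) * φ * (b + Dstar)^2 / Dstar)
    (hΩ : Ω = 2 * b^2 + lam * B^2 * Dstar^2 / (2 * (b + Dstar)^2))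
    -- feedback law
    (D : ℝ × ℝ × ℝ → ℝ)
    (hD : ∀ x : ℝ × ℝ × ℝ, D x =
      (κ + 1) * Dstar * g x.2.2 * Real.exp (x.1 - x.2.2) / p x.2.2 +
        (if x.2.2 ≤ 0 then δ * |g x.2.2 - 1| ^ (1 + α) else 0))
    -- closed-loop vector field
    (F : ℝ × ℝ × ℝ → ℝ × ℝ × ℝ)
    (hF : ∀ x : ℝ × ℝ × ℝ, F x =
      ((b + Dstar) * g x.2.2 * (Real.exp x.2.1 - 1) + b * (g x.2.2 - 1) +
         Dstar * g x.2.2 * (1 - Real.exp x.1),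
       (b + Dstar) * (lam * (1 - g x.2.2) + lam * (Real.exp (-x.2.1) - 1) +
         g x.2.2 * (1 - Real.exp x.2.1)),
       p x.2.2 * (D x - Dstar * g x.2.2 * Real.exp x.1))) :
    ∃ R > (0 : ℝ), ∀ Q : ℝ → ℝ,
      (∀ z, Q z = if z ≤ 0 then
          (1/2) * z^2 + (Ω / (2 * Dstar * δ)) *
            ∫ s in z..(0:ℝ), |g s - 1| ^ (1 - α) / (p s * g s)
        else
          R * ∫ s in (0:ℝ)..z, (Real.exp s / (g s)^2) * (Real.exp s - 1)) →
      ∀ V : ℝ × ℝ × ℝ → ℝ,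
        (∀ x : ℝ × ℝ × ℝ, V x = Real.exp x.1 - x.1 - 1 +
          (B / (b + Dstar)) * (Real.exp x.2.1 - x.2.1 - 1) + Q x.2.2) →
        (V 0 = 0 ∧ (∀ x : ℝ × ℝ × ℝ, x ≠ 0 → 0 < V x) ∧
          Filter.Tendsto V (Filter.cocompact (ℝ × ℝ × ℝ)) Filter.atTop ∧
          ∀ x : ℝ × ℝ × ℝ, x ≠ 0 → fderiv ℝ V x (F x) < 0) := by
  obtain ⟨hS0, hSlt⟩ := hSstar
  obtain ⟨hlam0, hlam1⟩ := hlam01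
  have hbD : 0 < b + Dstar := by linarith
  obtain ⟨hp_pos, hp_cont, hg_pos, hg_cont, hg0⟩ :=
    pos_continuous_of_chemostat ⟨hS0, hSlt⟩ hμ_C1 hμ_pos hκ hp hg
  obtain ⟨M, hM⟩ := exists_gain_le hμ_bdd (hμ_pos _ hS0) hg
  have hM0 : 0 < M := (hg_pos 0).trans_le (hM 0)
  obtain ⟨K, hK, hSK⟩ := exists_abs_gain_inv_sub_one_le ⟨hS0, hSlt⟩ hμ_C1 hμ_pos hκ hp hg
  have hΦ : 1 < (1 + lam) * φ := by nlinarith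
  have hDB : Dstar * B = (1 + lam) * φ * (b + Dstar) ^ 2 := by rw [hB]; field_simp
  have hB0 : 0 < B := by rw [hB]; positivity
  have hDB' : (b + Dstar) ^ 2 ≤ Dstar * B := by rw [hDB]; nlinarith [sq_nonneg (b + Dstar)]
  have hΩB : b ^ 2 + Dstar * B * lam ^ 2 ≤ Ω :=
    hΩ ▸ sq_add_mul_mul_sq_le hlam0 (by nlinarith) hbD hDB
  have hA : 0 < Dstar - Dstar / (4 * ((1 + lam) * φ)) := by
    rw [sub_pos, div_lt_iff₀ (by positivity)]; nlinarith
  have hC' : ∀ S ∈ Icc Sstar S_in, (b - lam * (b + Dstar) / 2) * (μ Sstar / μ S - 1) +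
      lam ^ 2 * B / 4 * (μ Sstar / μ S - 1) ^ 2 < Dstar - Dstar / (4 * ((1 + lam) * φ)) := by
    intro S hS
    have e : (1 + lam) * (lam ^ 2 * φ * (b + Dstar) ^ 2 / (4 * Dstar)) = lam ^ 2 * B / 4 := by
      rw [hB]; field_simp
    convert hC S hS using 2 <;> [rw [e]; ring]
  obtain ⟨c₀, hc₀⟩ := exists_forall_quadratic_nonpos (β := b - lam * (b + Dstar) / 2) hA
    (by positivity : 0 ≤ lam ^ 2 * B / 4)
  obtain ⟨R, hR, hRc⟩ : ∃ R > 0, c₀ ≤ R * Dstar / (2 * K ^ 2 * M ^ 2) := by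
    refine ⟨(|c₀| + 1) * (2 * K ^ 2 * M ^ 2) / Dstar, by positivity, ?_⟩
    field_simp
    linarith [le_abs_self c₀]
  refine ⟨R, hR, fun Q hQ V hV => ?_⟩
  set f₁ := fun s => |g s - 1| ^ (1 - α) / (p s * g s)
  set f₂ := fun s => exp s / g s ^ 2 * (exp s - 1)
  have hf₁ : Continuous f₁ := continuous_abs_sub_one_rpow_div hα.2 hp_cont hg_cont
    fun s => (mul_pos (hp_pos s) (hg_pos s)).ne'
  have hf₂ : Continuous f₂ := continuous_exp_div_sq_mul_exp_sub_one hg_cont fun s => (hg_pos s).ne'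
  have hf₁0 : f₁ 0 = 0 := by simp [f₁, hg0, zero_rpow (by linarith [hα.2] : (1 : ℝ) - α ≠ 0)]
  have hQdef : Q = lyapunovQ (Ω / (2 * Dstar * δ)) R f₁ f₂ := funext hQ
  have hVpos : IsPosDefRadiallyUnbounded V := by
    rw [funext hV, hQdef]
    exact isPosDefRadiallyUnbounded_lyapunov (div_pos hB0 hbD)
      (div_nonneg (hΩB.trans' (by positivity)) (by positivity)) hR (by positivity)
      (fun s => div_nonneg (rpow_nonneg (abs_nonneg _) _) (mul_pos (hp_pos s) (hg_pos s)).le)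
      hf₂ fun s => one_div_sq_mul_le_exp_div_sq_mul (hg_pos s) (hM s)
  refine ⟨hVpos.1, hVpos.2.1, hVpos.2.2, fun x hx => ?_⟩
  have hW : ∀ t, HasDerivAt (fun t => exp t - t - 1) (exp t - 1) t := fun t =>
    ((hasDerivAt_exp t).sub (hasDerivAt_id t)).sub_const 1
  have hQ' := hasDerivAt_lyapunovQ (c := Ω / (2 * Dstar * δ)) (R := R) hf₁ hf₂ hf₁0
    (by simp [f₂]) x.2.2
  rw [← hQdef] at hQ'
  rw [fderiv_separable_apply (f₁ := fun t => exp t - t - 1)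
    (f₂ := fun t => B / (b + Dstar) * (exp t - t - 1)) hV (hW x.1) ((hW x.2.1).const_mul _) hQ',
    hF x, hD x]
  dsimp only
  rcases lt_trichotomy x.2.2 0 with hz | hz | hz
  · simp only [if_pos hz.le]
    rw [feedback_mul_eq (hp _) (hp_pos _).ne']
    exact partialRate_add_lt_zero_of_neg hbD.ne' hlam0 hDstar hDB' hΩB hδ (hg_pos _) (hp_pos _) hz
      (rpow_nonneg (abs_nonneg _) _) (rpow_nonneg (abs_nonneg _) _)
      (abs_rpow_one_sub_mul_abs_rpow_one_add _ _)
  · have hx' : (x.1, x.2.1) ≠ 0 := fun h =>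
      hx (Prod.ext (Prod.ext_iff.1 h).1 (Prod.ext (Prod.ext_iff.1 h).2 hz))
    rw [hz, if_pos le_rfl, hf₁0, hg0]
    simp only [mul_zero, sub_zero, zero_mul, add_zero]
    exact partialRate_one_neg hbD.ne' hlam0 hDstar (by nlinarith) hx'
  · simp only [if_neg (not_le.2 hz)]
    rw [feedback_mul_eq (hp _) (hp_pos _).ne', mul_zero, add_zero]
    obtain ⟨S, hS, hgS, hψ⟩ := hSK _ hz
    exact partialRate_add_lt_zero_of_pos hbD.ne' hlam0 hDstar hB0 (by positivity) hDB hR hK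
      (hg_pos _) (hM _) hz (by rwa [add_sub_cancel]) hψ
      (hc₀ _ hRc _ (hC' _ hS) _ (by linarith [exp_pos x.1]))

/-- Under Assumption (C) with parameter φ, with
B := (1+λ)φ(b+D*)²/D* and Ω := 2b² + λB²(D*)²/(2(b+D*)²), there exists R > 0 such
that the function V built from Q is positive definite and radially unbounded on ℝ³
and satisfies ∇V(x)·F(x) < 0 for all x ≠ 0, where F is the closed-loop vector
field of the transformed age-structured chemostat. -/
theorem stmt_18
    (S_in Sstar p0 q0 γ b Dstar : ℝ) (μ : ℝ → ℝ)
    (hSin : 0 < S_in) (hSstar : Sstar ∈ Set.Ioo 0 S_in)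
    (hp0 : 0 < p0) (hq0 : 0 < q0) (hγ : 0 ≤ γ) (hb : 0 ≤ b) (hDstar : 0 < Dstar)
    (hμ_bdd : BddAbove (Set.range μ))
    (hμ_C1 : ContDiffOn ℝ 1 μ (Set.Ici 0))
    (hμ_nonneg : ∀ S, 0 ≤ S → 0 ≤ μ S)
    (hμ_zero : μ 0 = 0) (hμ_pos : ∀ S, 0 < S → 0 < μ S)
    (hμeq : μ Sstar = (b + Dstar)^2 / (p0 * (b + Dstar) + γ * q0))
    (Xstar Ystar : ℝ)
    (hX : Xstar = Dstar * (S_in - Sstar) * (p0 * (b + Dstar) + γ * q0) / (b + Dstar)^2)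
    (hY : Ystar = Dstar * (S_in - Sstar) * (p0 * (b + Dstar) + γ * q0)^2 /
          (q0 * (b + Dstar)^3))
    (lam : ℝ) (hlam : lam = 1 - p0 * μ Sstar / (b + Dstar))
    (hlam' : lam = γ * Xstar / (Ystar * (b + Dstar)))
    (hlam01 : lam ∈ Set.Ico (0 : ℝ) 1)
    (κ : ℝ) (hκ : κ = (S_in - Sstar) / Sstar)
    (p g : ℝ → ℝ)
    (hp : ∀ z, p z = κ * Real.exp (-z) + 1)
    (hg : ∀ z, g z = μ (S_in / p z) / μ Sstar)
    -- Assumption (C) with parameter φ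
    (φ : ℝ) (hφ : 1 < φ)
    (hC : ∀ S ∈ Set.Icc Sstar S_in,
      (b - lam * (b + Dstar) / 2) * (μ Sstar / μ S - 1) +
        (1 + lam) * (lam^2 * φ * (b + Dstar)^2 / (4 * Dstar)) *
          (μ Sstar / μ S - 1)^2 <
      Dstar * (1 - 1 / (4 * (1 + lam) * φ)))
    (δ α : ℝ) (hδ : 0 < δ) (hα : α ∈ Set.Ico (0 : ℝ) 1)
    (B Ω : ℝ)
    (hB : B = (1 + lam) * φ * (b + Dstar)^2 / Dstar)
    (hΩ : Ω = 2 * b^2 + lam * B^2 * Dstar^2 / (2 * (b + Dstar)^2))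
    -- feedback law
    (D : ℝ × ℝ × ℝ → ℝ)
    (hD : ∀ x : ℝ × ℝ × ℝ, D x =
      (κ + 1) * Dstar * g x.2.2 * Real.exp (x.1 - x.2.2) / p x.2.2 +
        (if x.2.2 ≤ 0 then δ * |g x.2.2 - 1| ^ (1 + α) else 0))
    -- closed-loop vector field
    (F : ℝ × ℝ × ℝ → ℝ × ℝ × ℝ)
    (hF : ∀ x : ℝ × ℝ × ℝ, F x =
      ((b + Dstar) * g x.2.2 * (Real.exp x.2.1 - 1) + b * (g x.2.2 - 1) +
         Dstar * g x.2.2 * (1 - Real.exp x.1),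
       (b + Dstar) * (lam * (1 - g x.2.2) + lam * (Real.exp (-x.2.1) - 1) +
         g x.2.2 * (1 - Real.exp x.2.1)),
       p x.2.2 * (D x - Dstar * g x.2.2 * Real.exp x.1))) :
    ∃ R > (0 : ℝ), ∀ Q : ℝ → ℝ,
      (∀ z, Q z = if z ≤ 0 then
          (1/2) * z^2 + (Ω / (2 * Dstar * δ)) *
            ∫ s in z..(0:ℝ), |g s - 1| ^ (1 - α) / (p s * g s)
        else
          R * ∫ s in (0:ℝ)..z, (Real.exp s / (g s)^2) * (Real.exp s - 1)) →
      ∀ V : ℝ × ℝ × ℝ → ℝ,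
        (∀ x : ℝ × ℝ × ℝ, V x = Real.exp x.1 - x.1 - 1 +
          (B / (b + Dstar)) * (Real.exp x.2.1 - x.2.1 - 1) + Q x.2.2) →
        (V 0 = 0 ∧ (∀ x : ℝ × ℝ × ℝ, x ≠ 0 → 0 < V x) ∧
          Filter.Tendsto V (Filter.cocompact (ℝ × ℝ × ℝ)) Filter.atTop ∧
          ∀ x : ℝ × ℝ × ℝ, x ≠ 0 → fderiv ℝ V x (F x) < 0) :=
  stmt_18_general S_in Sstar b Dstar μ hSstar hb hDstar hμ_bdd hμ_C1 hμ_pos lam hlam01 κ hκ p g hp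
    hg φ hφ hC δ α hδ hα B Ω hB hΩ D hD F hF
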